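/- Let H be the subgroup of SL(2,ℂ) consisting of upper triangular matrices (matrices of the form [[a, b], [0, a⁻¹]] with a ∈ ℂ×, b ∈ ℂ). If K is a subgroup of SL(2,ℂ) with H ⊆ K and K ≠ H, then K = SL(2,ℂ). -/

import Mathlib

/-!
Bruhat decomposition: an element `g = !![a, b; c, d]` of `SL(2, F)` with `c ≠ 0` factors as
`!![1, a / c; 0, 1] * w * !![c, d; 0, c⁻¹]` with `w = !![0, -1; 1, 0]`. So a subgroup containing
the Borel subgroup and one element outside it contains `w`, hence every such product.
-/

open Matrix MatrixGroups

namespace Matrix.SpecialLinearGroup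

section CommRing

variable (R : Type*) [CommRing R]

def borel : Subgroup SL(2, R) where
  carrier := {g | (g : Matrix (Fin 2) (Fin 2) R) 1 0 = 0}
  one_mem' := by simp
  mul_mem' {g h} (hg : _ = 0) (hh : _ = 0) := by
    simp [coe_mul, mul_apply, Fin.sum_univ_two, hg, hh]
  inv_mem' {g} (hg : _ = 0) := by
    simp [coe_inv, adjugate_fin_two, hg]

variable {R}

def weyl : SL(2, R) := ⟨!![0, -1; 1, 0], by simp [det_fin_two_of]⟩

theorem weyl_notMem_borel [Nontrivial R] : weyl ∉ borel R :=
  one_ne_zero (α := R)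

end CommRing

variable {F : Type*} [Field F]

theorem exists_eq_mul_weyl_mul_of_notMem_borel {g : SL(2, F)} (hg : g ∉ borel F) :
    ∃ b₁ ∈ borel F, ∃ b₂ ∈ borel F, g = b₁ * weyl * b₂ := by
  induction g using fin_two_induction with | h a b c d hdet =>
  have hc : c ≠ 0 := hg
  refine ⟨(⟨!![1, a / c; 0, 1], by simp [det_fin_two_of]⟩ : SL(2, F)), rfl,
    (⟨!![c, d; 0, c⁻¹], by simp [det_fin_two_of, hc]⟩ : SL(2, F)), rfl, ?_⟩
  have hb : b = a / c * d - c⁻¹ := by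
    field_simp
    linear_combination -hdet
  refine Subtype.ext ?_
  change !![a, b; c, d] = !![1, a / c; 0, 1] * !![0, -1; 1, 0] * !![c, d; 0, c⁻¹]
  ext i j
  fin_cases i <;> fin_cases j <;> simp [hb, hc, sub_eq_add_neg]

theorem isCoatom_borel : IsCoatom (borel F) := by
  refine ⟨fun h => weyl_notMem_borel (h ▸ Subgroup.mem_top weyl), fun K hK => ?_⟩
  obtain ⟨g, hgK, hg⟩ := SetLike.exists_of_lt hK
  have hweyl : weyl ∈ K := by
    obtain ⟨b₁, hb₁, b₂, hb₂, rfl⟩ := exists_eq_mul_weyl_mul_of_notMem_borel hg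
    simpa [mul_assoc] using
      K.mul_mem (K.mul_mem (K.inv_mem (hK.le hb₁)) hgK) (K.inv_mem (hK.le hb₂))
  refine eq_top_iff.2 fun g _ => ?_
  by_cases hg : g ∈ borel F
  · exact hK.le hg
  · obtain ⟨b₁, hb₁, b₂, hb₂, rfl⟩ := exists_eq_mul_weyl_mul_of_notMem_borel hg
    exact K.mul_mem (K.mul_mem (hK.le hb₁) hweyl) (hK.le hb₂)

end Matrix.SpecialLinearGroup

/-- The upper triangular (Borel) subgroup of `SL(2,ℂ)` is a maximal subgroup:
any subgroup containing it, together with some element not in it, is everything. -/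
theorem borel_maximal_in_SL2
    (K : Subgroup (Matrix.SpecialLinearGroup (Fin 2) ℂ))
    (hHK : ∀ g : Matrix.SpecialLinearGroup (Fin 2) ℂ, (g : Matrix (Fin 2) (Fin 2) ℂ) 1 0 = 0 → g ∈ K)
    (hne : ∃ g ∈ K, (g : Matrix (Fin 2) (Fin 2) ℂ) 1 0 ≠ 0) :
    K = ⊤ := by
  obtain ⟨g, hgK, hg⟩ := hne
  exact Matrix.SpecialLinearGroup.isCoatom_borel.2 K
    (SetLike.lt_iff_le_and_exists.2 ⟨fun x hx => hHK x hx, g, hgK, hg⟩)
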